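/- Let n ≥ 4 and let λ₁, …, λₙ be real numbers with λ₁ + ⋯ + λₙ = 0, not all zero. Writing pₖ = σₖ(λ)/C(n,k), if p₃² + 4p₂³ = 0 then there is a nonzero real number c such that, after reordering, λ₁ = ⋯ = λ_{n−1} = c and λₙ = (1 − n)c; consequently pₖ = (1 − k)·cᵏ for every positive integer k ≤ n, and in particular p₄ + 3p₂² = 0. -/

import Mathlib

/-!
By Newton's identities, when the `λᵢ` sum to zero, `p₂` and `p₃` are multiples of
`S = ∑ λᵢ²` and `T = ∑ λᵢ³`, and `p₃² + 4 p₂³ = 0` reads `n (n - 1) T² = (n - 2)² S³`.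
Replacing `λ` by `-λ` we may assume `T > 0`. Let `s = λⱼ` be the largest entry.
Cauchy–Schwarz on the other `n - 1` entries, which sum to `-s`, gives `n s² ≤ (n - 1) S`,
with equality only if they are all equal. In the other direction,
`∑ (λᵢ + t)² (s - λᵢ) ≥ 0` at `t = S / (n s)` gives `n s T ≤ S (n s² - S)`; squaring and
inserting the equality turns this into `((n - 1) x - S) (x - (n - 1) S) ≥ 0` for `x = n s²`,
so `x ≥ (n - 1) S`. Hence Cauchy–Schwarz is tight and `λ = (c, …, c, (1 - n) c)`, whose
normalized elementary symmetric functions follow from Pascal's rule.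
-/

open Finset

/-- The `k`-th elementary symmetric polynomial of `lam 0, …, lam (n-1)`. -/
noncomputable def esymm {n : ℕ} (k : ℕ) (lam : Fin n → ℝ) : ℝ :=
  ∑ s ∈ (Finset.univ : Finset (Fin n)).powersetCard k, ∏ i ∈ s, lam i

/-- The normalized elementary symmetric function `p k = σ k / C(n,k)`. -/
noncomputable def p {n : ℕ} (k : ℕ) (lam : Fin n → ℝ) : ℝ :=
  esymm k lam / (n.choose k)

theorem Multiset.esymm_cons_succ {R : Type*} [CommSemiring R] (a : R) (s : Multiset R) (k : ℕ) :
    (a ::ₘ s).esymm (k + 1) = s.esymm (k + 1) + a * s.esymm k := by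
  simp [Multiset.esymm, Multiset.powersetCard_cons, Multiset.map_map, Multiset.prod_cons,
    Multiset.sum_map_mul_left]

theorem Multiset.esymm_replicate {R : Type*} [CommSemiring R] (m k : ℕ) (c : R) :
    (Multiset.replicate m c).esymm k = m.choose k * c ^ k := by
  have hprod : ∀ t ∈ (Multiset.replicate m c).powersetCard k, t.prod = c ^ k := fun t ht => by
    obtain ⟨hle, hcard⟩ := Multiset.mem_powersetCard.1 ht
    rw [Multiset.eq_replicate.2
      ⟨hcard, fun b hb => Multiset.eq_of_mem_replicate (Multiset.mem_of_le hle hb)⟩,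
      Multiset.prod_replicate]
  rw [Multiset.esymm, Multiset.map_congr rfl hprod, Multiset.map_const', Multiset.sum_replicate,
    Multiset.card_powersetCard, Multiset.card_replicate, nsmul_eq_mul]

theorem card_mul_eq_sum_of_sq_sum_eq_card_mul_sum_sq {ι : Type*} {s : Finset ι} {f : ι → ℝ}
    (h : (∑ i ∈ s, f i) ^ 2 = #s * ∑ i ∈ s, f i ^ 2) (i : ι) (hi : i ∈ s) :
    #s * f i = ∑ j ∈ s, f j := by
  have hvar : ∑ i ∈ s, (#s * f i - ∑ j ∈ s, f j) ^ 2 =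
      #s * (#s * ∑ i ∈ s, f i ^ 2 - (∑ i ∈ s, f i) ^ 2) := by
    simp only [sub_sq, sum_add_distrib, sum_sub_distrib, ← mul_sum, ← sum_mul, mul_pow,
      sum_const, nsmul_eq_mul]
    ring
  rw [h, sub_self, mul_zero, sum_eq_zero_iff_of_nonneg fun _ _ => sq_nonneg _] at hvar
  exact sub_eq_zero.1 (pow_eq_zero_iff two_ne_zero |>.1 (hvar i hi))

theorem le_of_mul_sq_sub_le {m x S : ℝ} (hm : 2 ≤ m) (hS : 0 < S) (hSx : S < x)
    (h : (m - 2) ^ 2 * x * S ≤ (m - 1) * (x - S) ^ 2) : (m - 1) * S ≤ x := by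
  have hfactor : (m - 1) * (x - S) ^ 2 - (m - 2) ^ 2 * x * S =
      ((m - 1) * x - S) * (x - (m - 1) * S) := by
    ring
  have hpos : 0 < (m - 1) * x - S := by nlinarith
  nlinarith

theorem cast_card_univ_erase {ι : Type*} [Fintype ι] [DecidableEq ι] (j : ι) :
    (#(univ.erase j) : ℝ) = Fintype.card ι - 1 := by
  rw [card_erase_of_mem (mem_univ j), card_univ, Nat.cast_sub (Fintype.card_pos_iff.2 ⟨j⟩)]
  simp

section PowerSums

variable {ι : Type*} [Fintype ι] (lam : ι → ℝ)

theorem sum_cube_le_of_forall_le (hsum : ∑ i, lam i = 0) {s : ℝ} (hs : ∀ i, lam i ≤ s) (t : ℝ) :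
    ∑ i, lam i ^ 3 ≤ (s - 2 * t) * ∑ i, lam i ^ 2 + Fintype.card ι * s * t ^ 2 := by
  have hnonneg : 0 ≤ ∑ i, (lam i + t) ^ 2 * (s - lam i) :=
    sum_nonneg fun i _ => mul_nonneg (sq_nonneg _) (sub_nonneg.2 (hs i))
  have hexpand : ∀ i, (lam i + t) ^ 2 * (s - lam i) =
      (s - 2 * t) * lam i ^ 2 - lam i ^ 3 + (2 * t * s - t ^ 2) * lam i + t ^ 2 * s :=
    fun i => by ring
  simp only [hexpand, sum_add_distrib, sum_sub_distrib, ← mul_sum, hsum, sum_const, card_univ,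
    nsmul_eq_mul] at hnonneg
  linarith

theorem card_mul_sq_le_of_sum_eq_zero (hsum : ∑ i, lam i = 0) (j : ι) :
    Fintype.card ι * lam j ^ 2 ≤ (Fintype.card ι - 1) * ∑ i, lam i ^ 2 := by
  classical
  have hCS := sq_sum_le_card_mul_sum_sq (s := univ.erase j) (f := lam)
  rw [cast_card_univ_erase, sum_erase_eq_sub (mem_univ j), sum_erase_eq_sub (mem_univ j),
    hsum] at hCS
  linarith

theorem eq_of_card_mul_sq_eq_of_sum_eq_zero (hsum : ∑ i, lam i = 0) (j : ι)
    (h : Fintype.card ι * lam j ^ 2 = (Fintype.card ι - 1) * ∑ i, lam i ^ 2) (i : ι)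
    (hi : i ≠ j) : (Fintype.card ι - 1) * lam i = -lam j := by
  classical
  have hconst := card_mul_eq_sum_of_sq_sum_eq_card_mul_sum_sq (s := univ.erase j) (f := lam)
    (by rw [cast_card_univ_erase, sum_erase_eq_sub (mem_univ j), sum_erase_eq_sub (mem_univ j),
      hsum]; linarith) i (mem_erase.2 ⟨hi, mem_univ i⟩)
  rwa [cast_card_univ_erase, sum_erase_eq_sub (mem_univ j), hsum, zero_sub] at hconst

theorem card_sub_one_mul_sum_sq_le (hι : 2 ≤ Fintype.card ι) (hsum : ∑ i, lam i = 0)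
    (hT : 0 < ∑ i, lam i ^ 3)
    (hkey : (Fintype.card ι : ℝ) * (Fintype.card ι - 1) * (∑ i, lam i ^ 3) ^ 2 =
      (Fintype.card ι - 2) ^ 2 * (∑ i, lam i ^ 2) ^ 3) {s : ℝ} (hs : ∀ i, lam i ≤ s) :
    (Fintype.card ι - 1) * ∑ i, lam i ^ 2 ≤ Fintype.card ι * s ^ 2 := by
  set m : ℝ := (Fintype.card ι : ℝ)
  set S := ∑ i, lam i ^ 2
  set T := ∑ i, lam i ^ 3
  have hsS : 0 < s * S := hT.trans_le (by simpa using sum_cube_le_of_forall_le lam hsum hs 0)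
  have hs0 : 0 < s := pos_of_mul_pos_left hsS (sum_nonneg fun i _ => sq_nonneg _)
  have hS : 0 < S := pos_of_mul_pos_right hsS hs0.le
  have hm : (2 : ℝ) ≤ m := Nat.ofNat_le_cast.2 hι
  have hB : m * s * T ≤ S * (m * s ^ 2 - S) := by
    have h := sum_cube_le_of_forall_le lam hsum hs (S / (m * s))
    have hms : 0 < m * s := by positivity
    calc m * s * T ≤ m * s * ((s - 2 * (S / (m * s))) * S + m * s * (S / (m * s)) ^ 2) :=
          mul_le_mul_of_nonneg_left h hms.le
      _ = S * (m * s ^ 2 - S) := by field_simp; ring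
  have hmsT : 0 < m * s * T := by positivity
  refine le_of_mul_sq_sub_le hm hS (by nlinarith) (le_of_mul_le_mul_right ?_ (pow_pos hS 2))
  calc (m - 2) ^ 2 * (m * s ^ 2) * S * S ^ 2 = (m - 1) * (m * s * T) ^ 2 := by
        linear_combination (-(m * s ^ 2)) * hkey
    _ ≤ (m - 1) * (S * (m * s ^ 2 - S)) ^ 2 := by gcongr; linarith
    _ = (m - 1) * (m * s ^ 2 - S) ^ 2 * S ^ 2 := by ring

theorem exists_eq_one_sub_card_mul_of_sum_cube_pos (hι : 2 ≤ Fintype.card ι)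
    (hsum : ∑ i, lam i = 0) (hT : 0 < ∑ i, lam i ^ 3)
    (hkey : (Fintype.card ι : ℝ) * (Fintype.card ι - 1) * (∑ i, lam i ^ 3) ^ 2 =
      (Fintype.card ι - 2) ^ 2 * (∑ i, lam i ^ 2) ^ 3) :
    ∃ c : ℝ, c ≠ 0 ∧ ∃ j, lam j = (1 - Fintype.card ι) * c ∧ ∀ i, i ≠ j → lam i = c := by
  have : Nonempty ι := Fintype.card_pos_iff.1 (by omega)
  obtain ⟨j, -, hj⟩ := exists_max_image univ lam univ_nonempty
  have hmax : ∀ i, lam i ≤ lam j := fun i => hj i (mem_univ i)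
  have hpos : 0 < lam j := pos_of_mul_pos_left
    (hT.trans_le (by simpa using sum_cube_le_of_forall_le lam hsum hmax 0))
    (sum_nonneg fun i _ => sq_nonneg _)
  have hm : (Fintype.card ι : ℝ) - 1 ≠ 0 := by
    have : (2 : ℝ) ≤ Fintype.card ι := Nat.ofNat_le_cast.2 hι
    linarith
  have heq := le_antisymm (card_mul_sq_le_of_sum_eq_zero lam hsum j)
    (card_sub_one_mul_sum_sq_le lam hι hsum hT hkey hmax)
  refine ⟨-lam j / (Fintype.card ι - 1), div_ne_zero (neg_ne_zero.2 hpos.ne') hm, j,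
    by field_simp; ring, fun i hi => ?_⟩
  rw [eq_div_iff hm, mul_comm]
  exact eq_of_card_mul_sq_eq_of_sum_eq_zero lam hsum j heq i hi

theorem exists_eq_one_sub_card_mul (hι : 2 ≤ Fintype.card ι)
    (hsum : ∑ i, lam i = 0) (hT : ∑ i, lam i ^ 3 ≠ 0)
    (hkey : (Fintype.card ι : ℝ) * (Fintype.card ι - 1) * (∑ i, lam i ^ 3) ^ 2 =
      (Fintype.card ι - 2) ^ 2 * (∑ i, lam i ^ 2) ^ 3) :
    ∃ c : ℝ, c ≠ 0 ∧ ∃ j, lam j = (1 - Fintype.card ι) * c ∧ ∀ i, i ≠ j → lam i = c := by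
  rcases hT.lt_or_gt with hneg | hpos
  · obtain ⟨c, hc, j, hj, hother⟩ := exists_eq_one_sub_card_mul_of_sum_cube_pos (-lam) hι
      (by simp [hsum]) (by simpa [Odd.neg_pow (by decide : Odd 3)] using hneg)
      (by simpa [Odd.neg_pow (by decide : Odd 3)] using hkey)
    refine ⟨-c, neg_ne_zero.2 hc, j, ?_, fun i hi => ?_⟩
    · rw [mul_neg, ← hj, Pi.neg_apply, neg_neg]
    · rw [← hother i hi, Pi.neg_apply, neg_neg]
  · exact exists_eq_one_sub_card_mul_of_sum_cube_pos lam hι hsum hpos hkey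

end PowerSums

section Symmetric

variable {n : ℕ} (lam : Fin n → ℝ)

theorem esymm_eq_eval (k : ℕ) :
    esymm k lam = MvPolynomial.eval lam (MvPolynomial.esymm (Fin n) ℝ k) := by
  simp [esymm, MvPolynomial.esymm]

theorem esymm_eq_multiset_esymm (k : ℕ) : esymm k lam = (univ.val.map lam).esymm k :=
  (esymm_map_val lam univ k).symm

theorem esymm_zero : esymm 0 lam = 1 := by simp [esymm]

theorem esymm_one : esymm 1 lam = ∑ i, lam i := by simp [esymm, powersetCard_one]

theorem mul_esymm_eq_sum (k : ℕ) :
    k * esymm k lam = (-1) ^ (k + 1) *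
      ∑ a ∈ antidiagonal k with a.1 < k, (-1) ^ a.1 * esymm a.1 lam * ∑ i, lam i ^ a.2 := by
  simpa [esymm_eq_eval, MvPolynomial.psum] using
    congrArg (MvPolynomial.eval lam) (MvPolynomial.mul_esymm_eq_sum (Fin n) ℝ k)

theorem p_two_of_sum_eq_zero (hsum : ∑ i, lam i = 0) :
    p 2 lam = -(∑ i, lam i ^ 2) / (n * (n - 1)) := by
  have h := mul_esymm_eq_sum lam 2
  rw [show (antidiagonal 2).filter (·.1 < 2) = {(0, 2), (1, 1)} by decide,
    sum_pair (by decide)] at h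
  have he : esymm 2 lam = -(∑ i, lam i ^ 2) / 2 := by
    norm_num [esymm_zero, esymm_one, hsum] at h
    linarith
  rw [p, he, Nat.cast_choose_two, div_div_div_cancel_right₀ two_ne_zero]

theorem p_three_of_sum_eq_zero (hsum : ∑ i, lam i = 0) :
    p 3 lam = 2 * (∑ i, lam i ^ 3) / (n * (n - 1) * (n - 2)) := by
  have h := mul_esymm_eq_sum lam 3
  rw [show (antidiagonal 3).filter (·.1 < 3) = {(0, 3), (1, 2), (2, 1)} by decide,
    sum_insert (by decide), sum_pair (by decide)] at h
  have he : esymm 3 lam = 2 * (∑ i, lam i ^ 3) / 6 := by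
    norm_num [esymm_zero, esymm_one, hsum] at h
    linarith
  have hC : (n.choose 3 : ℝ) = n * (n - 1) * (n - 2) / 6 := by
    rw [Nat.cast_choose_eq_descPochhammer_div]
    simp [descPochhammer_succ_right, Nat.factorial]
  rw [p, he, hC, div_div_div_cancel_right₀ (by norm_num : (6 : ℝ) ≠ 0)]

theorem mul_sq_sum_cube_eq_of_p_three_sq_add_four_mul_p_two_cube_eq_zero (hn : 3 ≤ n)
    (hsum : ∑ i, lam i = 0) (h : p 3 lam ^ 2 + 4 * p 2 lam ^ 3 = 0) :
    n * (n - 1) * (∑ i, lam i ^ 3) ^ 2 = (n - 2) ^ 2 * (∑ i, lam i ^ 2) ^ 3 := by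
  have hn' : (3 : ℝ) ≤ n := Nat.ofNat_le_cast.2 hn
  have h0 : (n : ℝ) ≠ 0 := by linarith
  have h1 : (n : ℝ) - 1 ≠ 0 := by linarith
  have h2 : (n : ℝ) - 2 ≠ 0 := by linarith
  rw [p_two_of_sum_eq_zero lam hsum, p_three_of_sum_eq_zero lam hsum] at h
  field_simp at h
  linear_combination h / 4

variable {lam}

theorem univ_val_map_eq_cons_replicate {c : ℝ} {j : Fin n} (hother : ∀ i, i ≠ j → lam i = c) :
    univ.val.map lam = lam j ::ₘ Multiset.replicate (n - 1) c := by
  rw [← insert_erase (mem_univ j), insert_val_of_notMem (notMem_erase j univ), Multiset.map_cons]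
  refine congrArg _ (Multiset.eq_replicate.2 ⟨by simp, fun b hb => ?_⟩)
  obtain ⟨i, hi, rfl⟩ := Multiset.mem_map.1 hb
  exact hother i (ne_of_mem_erase (mem_def.2 hi))

theorem p_eq_one_sub_mul_pow {c : ℝ} {j : Fin n} (hj : lam j = (1 - n) * c)
    (hother : ∀ i, i ≠ j → lam i = c) {k : ℕ} (hk : k ≤ n) :
    p k lam = (1 - k) * c ^ k := by
  cases n with
  | zero => exact j.elim0
  | succ m =>
  cases k with
  | zero => simp [p, esymm]
  | succ k =>
  have hC : (0 : ℝ) < (m + 1).choose (k + 1) := by exact_mod_cast Nat.choose_pos hk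
  have hpascal : ((m + 1).choose (k + 1) : ℝ) = m.choose k + m.choose (k + 1) := by
    exact_mod_cast Nat.choose_succ_succ m k
  have habsorb : ((m + 1) * m.choose k : ℝ) = (m + 1).choose (k + 1) * (k + 1) := by
    exact_mod_cast Nat.add_one_mul_choose_eq m k
  rw [p, esymm_eq_multiset_esymm, univ_val_map_eq_cons_replicate hother,
    Multiset.esymm_cons_succ, Multiset.esymm_replicate, Multiset.esymm_replicate, hj,
    div_eq_iff hC.ne']
  push_cast
  linear_combination (-c ^ (k + 1)) * habsorb + (-c ^ (k + 1)) * hpascal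

end Symmetric

theorem equality_case_structure (n : ℕ) (hn : 4 ≤ n) (lam : Fin n → ℝ)
    (hsum : ∑ i, lam i = 0) (hne : lam ≠ 0)
    (heq : p 3 lam ^ 2 + 4 * p 2 lam ^ 3 = 0) :
    ∃ c : ℝ, c ≠ 0 ∧
      (∃ j : Fin n, lam j = (1 - (n : ℝ)) * c ∧ ∀ i, i ≠ j → lam i = c) ∧
      (∀ k : ℕ, 1 ≤ k → k ≤ n → p k lam = (1 - (k : ℝ)) * c ^ k) ∧
      p 4 lam + 3 * p 2 lam ^ 2 = 0 := by
  have hn' : (4 : ℝ) ≤ n := Nat.ofNat_le_cast.2 hn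
  have hS : 0 < ∑ i, lam i ^ 2 := by
    obtain ⟨i, hi⟩ := Function.ne_iff.1 hne
    exact sum_pos' (fun i _ => sq_nonneg _) ⟨i, mem_univ i, pow_two_pos_of_ne_zero hi⟩
  have hkey :=
    mul_sq_sum_cube_eq_of_p_three_sq_add_four_mul_p_two_cube_eq_zero lam (by omega) hsum heq
  have hT : ∑ i, lam i ^ 3 ≠ 0 := fun hT => by
    have hpos : 0 < ((n : ℝ) - 2) ^ 2 * (∑ i, lam i ^ 2) ^ 3 :=
      mul_pos (pow_pos (by linarith) 2) (pow_pos hS 3)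
    rw [hT] at hkey
    linarith
  obtain ⟨c, hc, j, hj, hother⟩ := exists_eq_one_sub_card_mul lam (by simpa using by omega)
    hsum hT (by simpa using hkey)
  rw [Fintype.card_fin] at hj
  have hp {k : ℕ} (hk : k ≤ n) := p_eq_one_sub_mul_pow hj hother hk
  refine ⟨c, hc, ⟨j, hj, hother⟩, fun k _ hk => hp hk, ?_⟩
  rw [hp hn, hp (by omega)]
  push_cast
  ring
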